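/- arXiv:math/0703251 — 4 statements merged into one kernel-verified Lean document; each statement's English description precedes it below -/
import Mathlib

section
/- Let m ≥ 1, g ≥ 1 and n ≥ 1, and for each matrix X ∈ SL(m,ℂ) write det(λI − X) = λᵐ + Σ_{k=1}^{m} (−1)ᵏ c_k(X) λ^{m−k} (so c₁(X) = tr(X) and c_m(X) = det(X) = 1). Then for every choice of complex numbers τ^i_k (1 ≤ i ≤ n, 1 ≤ k ≤ m−1) there exist matrices X₁, Y₁, …, X_g, Y_g, B₁, …, B_n ∈ SL(m,ℂ) such that [X₁,Y₁]⋯[X_g,Y_g]·B₁⋯B_n = I and c_k(B_i) = τ^i_k for all 1 ≤ i ≤ n and 1 ≤ k ≤ m−1. (This expresses the surjectivity of the boundary map of the relative character variety of a genus-g surface with n boundary components when g ≥ 1.) -/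
/-- `c_k(X)`, the `k`-th coefficient of the characteristic polynomial of `X ∈ SL(m,ℂ)`,
defined by `det(λI − X) = λ^m + Σ_{k=1}^m (−1)^k c_k(X) λ^{m−k}`. -/
noncomputable def charCoeff (m : ℕ) (k : ℕ) (X : Matrix.SpecialLinearGroup (Fin m) ℂ) : ℂ :=
  (-1 : ℂ) ^ k * (Matrix.charpoly (X : Matrix (Fin m) (Fin m) ℂ)).coeff (m - k)

/-!
Take every `B_i` diagonal, with the roots of the prescribed characteristic polynomial on the
diagonal; its constant term is chosen so that `det B_i = 1`. Then `B₁⋯B_n = diag(q)` with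
`∏ q_j = 1`, and such a matrix is a commutator: since `∏ q_j = 1` one can solve
`d_j = q_j d_{j+1}` with indices mod `m`, and then `[diag(d), P] = diag(q)` for the cyclic
permutation matrix `P`. Rescaling `diag(d)` and `P` into `SL(m,ℂ)` does not change their
commutator. The inverse of `diag(q)` then fills the first handle, the others are trivial.
-/

open Polynomial Matrix

theorem Polynomial.exists_monic_natDegree_eq_coeff_eq {R : Type*} [Semiring R] [Nontrivial R]
    (m : ℕ) (a : ℕ → R) :
    ∃ p : R[X], p.Monic ∧ p.natDegree = m ∧ ∀ j < m, p.coeff j = a j := by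
  have hlt : (∑ j : Fin m, C (a j) * X ^ (j : ℕ)).degree < (m : WithBot ℕ) :=
    degree_sum_fin_lt _
  refine ⟨X ^ m + ∑ j : Fin m, C (a j) * X ^ (j : ℕ), monic_X_pow_add hlt, ?_, fun j hj => ?_⟩
  · rw [natDegree_add_eq_left_of_degree_lt (by rwa [degree_X_pow]), natDegree_X_pow]
  · simp only [coeff_add, coeff_X_pow, if_neg hj.ne, finsetSum_coeff, coeff_C_mul_X_pow,
      zero_add]
    rw [Fin.sum_univ_eq_sum_range (fun i => if j = i then a i else 0), Finset.sum_ite_eq,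
      if_pos (Finset.mem_range.2 hj)]

theorem Matrix.exists_charpoly_diagonal_eq {K : Type*} [Field K] [IsAlgClosed K] {m : ℕ}
    {p : K[X]} (hp : p.Monic) (hdeg : p.natDegree = m) :
    ∃ r : Fin m → K, (diagonal r).charpoly = p := by
  have hlen : p.roots.toList.length = m := by
    rw [Multiset.length_toList, IsAlgClosed.card_roots_eq_natDegree, hdeg]
  subst hlen
  refine ⟨p.roots.toList.get, ?_⟩
  rw [charpoly_diagonal, ← List.prod_ofFn]
  simp only [List.get_eq_getElem]
  rw [List.ofFn_getElem_eq_map (f := fun a => X - C a), ← Multiset.prod_coe, ← Multiset.map_coe,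
    Multiset.coe_toList,
    prod_multiset_X_sub_C_of_monic_of_roots_card_eq hp IsAlgClosed.card_roots_eq_natDegree]

theorem exists_coe_eq_diagonal_charCoeff_eq (m : ℕ) (τ : ℕ → ℂ) :
    ∃ (B : SpecialLinearGroup (Fin m) ℂ) (r : Fin m → ℂ),
      (B : Matrix (Fin m) (Fin m) ℂ) = diagonal r ∧
      ∀ k, 1 ≤ k → k ≤ m - 1 → charCoeff m k B = τ k := by
  obtain ⟨p, hp, hdeg, hcoeff⟩ := exists_monic_natDegree_eq_coeff_eq m
    fun j => (-1) ^ (m - j) * if j = 0 then 1 else τ (m - j)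
  obtain ⟨r, hr⟩ := exists_charpoly_diagonal_eq hp hdeg
  have hdet : (diagonal r).det = 1 := by
    rcases Nat.eq_zero_or_pos m with rfl | hm
    · exact det_fin_zero
    · simp [det_eq_sign_charpoly_coeff, hr, hcoeff 0 hm, ← mul_pow]
  refine ⟨⟨diagonal r, hdet⟩, r, rfl, fun k hk1 hkm => ?_⟩
  change (-1) ^ k * (diagonal r).charpoly.coeff (m - k) = τ k
  rw [hr, hcoeff (m - k) (by omega), if_neg (by omega), Nat.sub_sub_self (by omega),
    ← mul_assoc, ← mul_pow]
  simp

theorem Matrix.SpecialLinearGroup.coe_list_prod_ofFn_of_coe_eq_diagonal {R ι : Type*}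
    [CommRing R] [Fintype ι] [DecidableEq ι] {n : ℕ} {B : Fin n → SpecialLinearGroup ι R}
    {r : Fin n → ι → R} (hB : ∀ i, (B i : Matrix ι ι R) = diagonal (r i)) :
    ((List.ofFn B).prod : Matrix ι ι R) = diagonal (∏ i, r i) := by
  rw [← coeMonoidHom_apply, map_list_prod, List.map_ofFn, ← List.prod_ofFn,
    ← diagonalRingHom_apply, map_list_prod, List.map_ofFn]
  congr 2
  ext1 i
  simp [hB]

theorem exists_eq_mul_comp_finRotate {G : Type*} [CommGroup G] {m : ℕ} (q : Fin m → G)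
    (hq : ∏ i, q i = 1) : ∃ d : Fin m → G, ∀ i, d i = q i * d (finRotate m i) := by
  cases m with
  | zero => exact ⟨1, fun i => i.elim0⟩
  | succ m =>
    refine ⟨fun i => (Fin.partialProd q i.castSucc)⁻¹, fun i => ?_⟩
    induction i using Fin.lastCases with
    | last =>
      have hlast := Fin.partialProd_succ q (Fin.last m)
      rw [Fin.succ_last, Fin.partialProd, List.take_of_length_le (by simp), List.prod_ofFn,
        hq] at hlast
      simpa using inv_eq_of_mul_eq_one_right hlast.symm
    | cast j =>
      dsimp only
      rw [finRotate_apply, Fin.coeSucc_eq_succ, ← Fin.succ_castSucc, Fin.partialProd_succ,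
        mul_inv, mul_inv_cancel_comm_assoc]

theorem Matrix.diagonal_mul_permMatrix_of_eq_mul {R n : Type*} [Semiring R] [Fintype n]
    [DecidableEq n] (σ : Equiv.Perm n) {d q : n → R} (h : ∀ i, d i = q i * d (σ i)) :
    diagonal d * σ.permMatrix R = diagonal q * σ.permMatrix R * diagonal d := by
  ext i j
  by_cases hij : σ i = j
  · subst hij
    simp [PEquiv.toMatrix_apply, h i]
  · simp [PEquiv.toMatrix_apply, hij]

theorem Matrix.exists_det_smul_eq_one {K n : Type*} [Field K] [IsAlgClosed K] [Fintype n]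
    [DecidableEq n] [Nonempty n] {A : Matrix n n K} (hA : A.det ≠ 0) :
    ∃ c : K, (c • A).det = 1 := by
  obtain ⟨c, hc⟩ := IsAlgClosed.exists_pow_nat_eq A.det⁻¹ (Fintype.card_pos (α := n))
  exact ⟨c, by rw [det_smul, hc, inv_mul_cancel₀ hA]⟩

theorem Matrix.SpecialLinearGroup.commutator_eq_of_coe_mul_eq {R n : Type*} [CommRing R]
    [Fintype n] [DecidableEq n] {X Y Q : SpecialLinearGroup n R}
    (h : (X : Matrix n n R) * Y = Q * Y * X) :
    X * Y * X⁻¹ * Y⁻¹ = Q := by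
  rw [show X * Y = Q * Y * X from Subtype.ext h]
  group

theorem Matrix.SpecialLinearGroup.exists_commutator_eq_of_coe_eq_diagonal {K : Type*} [Field K]
    [IsAlgClosed K] {m : ℕ} (hm : 0 < m) {Q : SpecialLinearGroup (Fin m) K} {q : Fin m → K}
    (hQ : (Q : Matrix (Fin m) (Fin m) K) = diagonal q) :
    ∃ X Y : SpecialLinearGroup (Fin m) K, X * Y * X⁻¹ * Y⁻¹ = Q := by
  have : Nonempty (Fin m) := ⟨⟨0, hm⟩⟩
  have hq : ∏ i, q i = 1 := by rw [← det_diagonal, ← hQ, Q.det_coe]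
  have hq0 : ∀ i, q i ≠ 0 := fun i =>
    Finset.prod_ne_zero_iff.1 (hq ▸ one_ne_zero) i (Finset.mem_univ i)
  obtain ⟨d, hd⟩ := exists_eq_mul_comp_finRotate (fun i => Units.mk0 (q i) (hq0 i))
    (Units.ext (by simpa using hq))
  set D := diagonal fun i => (d i : K)
  set P := (finRotate m).permMatrix K
  have hDP : D * P = diagonal q * P * D :=
    diagonal_mul_permMatrix_of_eq_mul _ fun i => by simpa using congrArg Units.val (hd i)
  obtain ⟨a, ha⟩ := exists_det_smul_eq_one (A := D)
    (by simp [D, det_diagonal, Finset.prod_ne_zero_iff])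
  obtain ⟨b, hb⟩ := exists_det_smul_eq_one (A := P) (by simp [P, det_permutation])
  refine ⟨⟨a • D, ha⟩, ⟨b • P, hb⟩, commutator_eq_of_coe_mul_eq ?_⟩
  change a • D * b • P = Q * b • P * a • D
  simp only [hQ, Matrix.mul_smul, Matrix.smul_mul, smul_smul, hDP, mul_comm a b]

theorem exists_list_prod_commutators_eq {G : Type*} [Group G] {g : ℕ} (hg : 1 ≤ g) (x y : G) :
    ∃ X Y : Fin g → G,
      (List.ofFn fun i => X i * Y i * (X i)⁻¹ * (Y i)⁻¹).prod = x * y * x⁻¹ * y⁻¹ := by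
  obtain ⟨g, rfl⟩ := Nat.exists_eq_add_of_le' hg
  exact ⟨Fin.cons x 1, Fin.cons y 1, by simp [List.ofFn_succ]⟩

theorem boundary_map_surjective_general (m g n : ℕ) (hm : 1 ≤ m) (hg : 1 ≤ g)
    (τ : Fin n → ℕ → ℂ) :
    ∃ (X Y : Fin g → Matrix.SpecialLinearGroup (Fin m) ℂ)
      (B : Fin n → Matrix.SpecialLinearGroup (Fin m) ℂ),
      (List.ofFn fun i => X i * Y i * (X i)⁻¹ * (Y i)⁻¹).prod * (List.ofFn B).prod = 1 ∧
      ∀ (i : Fin n) (k : ℕ), 1 ≤ k → k ≤ m - 1 → charCoeff m k (B i) = τ i k := by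
  choose B r hBr hτ using fun i => exists_coe_eq_diagonal_charCoeff_eq m (τ i)
  obtain ⟨x, y, hxy⟩ := SpecialLinearGroup.exists_commutator_eq_of_coe_eq_diagonal hm
    (SpecialLinearGroup.coe_list_prod_ofFn_of_coe_eq_diagonal hBr)
  obtain ⟨X, Y, hXY⟩ := exists_list_prod_commutators_eq hg y x
  refine ⟨X, Y, B, ?_, hτ⟩
  rw [hXY, ← hxy]
  group

/-- Surjectivity of the boundary map for `g ≥ 1`: for every choice of complex numbers
`τ^i_k` (`1 ≤ i ≤ n`, `1 ≤ k ≤ m−1`) there exist `X₁, Y₁, …, X_g, Y_g, B₁, …, B_n ∈ SL(m,ℂ)`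
with `[X₁,Y₁]⋯[X_g,Y_g]·B₁⋯B_n = 1` and `c_k(B_i) = τ^i_k` for all `i`, `k`. -/
theorem boundary_map_surjective (m g n : ℕ) (hm : 1 ≤ m) (hg : 1 ≤ g) (hn : 1 ≤ n)
    (τ : Fin n → ℕ → ℂ) :
    ∃ (X Y : Fin g → Matrix.SpecialLinearGroup (Fin m) ℂ)
      (B : Fin n → Matrix.SpecialLinearGroup (Fin m) ℂ),
      (List.ofFn fun i => X i * Y i * (X i)⁻¹ * (Y i)⁻¹).prod * (List.ofFn B).prod = 1 ∧
      ∀ (i : Fin n) (k : ℕ), 1 ≤ k → k ≤ m - 1 → charCoeff m k (B i) = τ i k :=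
  boundary_map_surjective_general m g n hm hg τ
end

section
/- Every polynomial function f on SL(3,ℂ) (i.e. the restriction to SL(3,ℂ) of a polynomial in the nine matrix entries) that is invariant under conjugation (f(gXg⁻¹) = f(X) for all g, X ∈ SL(3,ℂ)) is a polynomial with complex coefficients in the two functions X ↦ tr(X) and X ↦ tr(X⁻¹); moreover these two functions are algebraically independent over ℂ, i.e. no nonzero polynomial p ∈ ℂ[u,v] satisfies p(tr(X), tr(X⁻¹)) = 0 for all X ∈ SL(3,ℂ). -/
/-- The `SL(3,ℂ)` group. -/
abbrev SL3 := Matrix.SpecialLinearGroup (Fin 3) ℂ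

/-- Trace of an element of `SL(3,ℂ)`, viewed as a `3 × 3` complex matrix. -/
noncomputable def trc (W : SL3) : ℂ := Matrix.trace (W : Matrix (Fin 3) (Fin 3) ℂ)

/-!
If `e₀` is a cyclic vector of `X ∈ SL₃`, i.e. the Krylov matrix `[e₀, X e₀, X² e₀]` is
invertible, then `X` is conjugate to the companion matrix of its characteristic polynomial
`t³ - tr X t² + tr X⁻¹ t - 1`. Hence a conjugation-invariant `f` agrees with `q(tr X, tr X⁻¹)`
wherever the Krylov determinant does not vanish, `q(a, b)` being `f` of the companion matrix.
The variety `SL₃` is irreducible: any point is joined to any other by a polynomial curve, a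
product of transvections with polynomial coefficients. So the polynomial function
`(f - q(tr, tr⁻¹)) · det Krylov`, which vanishes on `SL₃`, forces `f = q(tr, tr⁻¹)`.
Algebraic independence holds because companion matrices realise every pair `(tr X, tr X⁻¹)`.
-/

open Matrix Polynomial

lemma MvPolynomial.eval_aeval {σ τ R : Type*} [CommRing R] (p : MvPolynomial σ R)
    (g : σ → MvPolynomial τ R) (x : τ → R) :
    eval x (aeval g p) = eval (fun s => eval x (g s)) p := by
  rw [← aeval_eq_eval, comp_aeval_apply]
  rfl

namespace Matrix.SpecialLinearGroup

variable {ι K : Type*} [Fintype ι] [DecidableEq ι] [Field K]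

lemma diag2n_eq_prod_transvection {i j : ι} (hij : i ≠ j) (a : K) (ha : a ≠ 0) :
    diag2n hij a ha = transvection hij a * transvection hij.symm (-a⁻¹) * transvection hij a *
      transvection hij (-1) * transvection hij.symm 1 * transvection hij (-1) := by
  ext k l
  simp only [coe_mul, transvection_coe, diag2n_coe, mul_add, add_mul, mul_one, one_mul,
    single_mul_single_same]
  by_cases hk : k = i <;> by_cases hl : l = i <;> by_cases hk' : k = j <;> by_cases hl' : l = j <;>
    simp_all [single_apply, diagonal_apply, one_apply, eq_comm]

lemma map_transvection {R S : Type*} [CommRing R] [CommRing S] (φ : R →+* S) {i j : ι}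
    (hij : i ≠ j) (c : R) : map φ (transvection hij c) = transvection hij (φ c) := by
  ext k l
  simp [transvection_coe, single_apply, one_apply, apply_ite φ]

variable (ι K) in
def polynomiallyJoinedToOne : Submonoid (SpecialLinearGroup ι K) where
  carrier := {M | ∃ Z : SpecialLinearGroup ι K[X],
    map (evalRingHom 0) Z = 1 ∧ map (evalRingHom 1) Z = M}
  one_mem' := ⟨1, map_one _, map_one _⟩
  mul_mem' := by
    rintro A B ⟨Z, hZ0, hZ1⟩ ⟨W, hW0, hW1⟩
    exact ⟨Z * W, by simp [hZ0, hW0], by simp [hZ1, hW1]⟩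

theorem polynomiallyJoinedToOne_eq_top [Nontrivial ι] : polynomiallyJoinedToOne ι K = ⊤ := by
  have htransvec : ∀ (i j : ι) (hij : i ≠ j) (c : K),
      transvection hij c ∈ polynomiallyJoinedToOne ι K := fun i j hij c =>
    ⟨transvection hij (C c * X), by simp [map_transvection, transvection_coeff_zero],
      by simp [map_transvection]⟩
  refine eq_top_iff.mpr fun M _ => diagonal_transvection_induction' _ M
    (fun i j hij c hc => ?_) htransvec (fun _ _ => Submonoid.mul_mem _)
  rw [diag2n_eq_prod_transvection]
  repeat' apply Submonoid.mul_mem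
  all_goals apply htransvec

lemma eval_aeval_coe {R : Type*} [CommRing R] (Z : SpecialLinearGroup ι R[X])
    (p : MvPolynomial (ι × ι) R) (t : R) :
    (MvPolynomial.aeval (fun ij => (Z : Matrix ι ι R[X]) ij.1 ij.2) p).eval t =
      MvPolynomial.eval (fun ij => (map (evalRingHom t) Z : Matrix ι ι R) ij.1 ij.2) p := by
  rw [← coe_aeval_eq_eval, MvPolynomial.comp_aeval_apply]
  rfl

/-- The coordinate ring of `SL(ι, K)` is a domain: `SL(ι, K)` is an irreducible variety. -/
theorem eval_eq_zero_of_eval_mul_eval_eq_zero [Nontrivial ι] [Infinite K]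
    (p d : MvPolynomial (ι × ι) K)
    (h : ∀ X : SpecialLinearGroup ι K,
      MvPolynomial.eval (fun ij => (X : Matrix ι ι K) ij.1 ij.2) p *
        MvPolynomial.eval (fun ij => (X : Matrix ι ι K) ij.1 ij.2) d = 0)
    (X₀ : SpecialLinearGroup ι K)
    (hX₀ : MvPolynomial.eval (fun ij => (X₀ : Matrix ι ι K) ij.1 ij.2) d ≠ 0)
    (X : SpecialLinearGroup ι K) :
    MvPolynomial.eval (fun ij => (X : Matrix ι ι K) ij.1 ij.2) p = 0 := by
  obtain ⟨Z, hZ0, hZ1⟩ : X⁻¹ * X₀ ∈ polynomiallyJoinedToOne ι K := by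
    rw [polynomiallyJoinedToOne_eq_top]; trivial
  set W := map C X * Z
  have hW : ∀ t, map (evalRingHom t) W = X * map (evalRingHom t) Z := fun t => by
    rw [map_mul]; congr 1; ext i j; simp
  set P := MvPolynomial.aeval (fun ij => (W : Matrix ι ι K[X]) ij.1 ij.2) p
  set D := MvPolynomial.aeval (fun ij => (W : Matrix ι ι K[X]) ij.1 ij.2) d
  have hPD : P * D = 0 := Polynomial.funext fun t => by
    rw [eval_mul, eval_aeval_coe, eval_aeval_coe, eval_zero]
    exact h _
  have hD : D ≠ 0 := fun hD => hX₀ <| by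
    have := congr_arg (eval 1) hD
    rwa [eval_aeval_coe, hW, hZ1, mul_inv_cancel_left, eval_zero] at this
  have hP : P = 0 := (mul_eq_zero.mp hPD).resolve_right hD
  have := congr_arg (eval 0) hP
  rwa [eval_aeval_coe, hW, hZ0, mul_one, eval_zero] at this

theorem apply_eq_of_mul_eq_mul [IsAlgClosed K] [Nonempty ι] {α : Type*}
    (f : SpecialLinearGroup ι K → α) (hf : ∀ g X, f (g * X * g⁻¹) = f X)
    {X Y : SpecialLinearGroup ι K} (P : Matrix ι ι K) (hP : P.det ≠ 0)
    (h : (Y : Matrix ι ι K) * P = P * X) : f Y = f X := by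
  obtain ⟨c, hc⟩ := IsAlgClosed.exists_pow_nat_eq P.det (Fintype.card_pos (α := ι))
  let g : SpecialLinearGroup ι K := ⟨c⁻¹ • P, by rw [det_smul, inv_pow, hc, inv_mul_cancel₀ hP]⟩
  have hYg : Y * g = g * X := Subtype.ext <| by
    change (Y : Matrix ι ι K) * (c⁻¹ • P) = (c⁻¹ • P) * X
    rw [Matrix.mul_smul, Matrix.smul_mul, h]
  rw [← hf g X, ← hYg, mul_inv_cancel_right]

end Matrix.SpecialLinearGroup

lemma eval_aeval_trace_trace_adjugate {ι R : Type*} [Fintype ι] [DecidableEq ι] [CommRing R]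
    (q : MvPolynomial (Fin 2) R) (A : Matrix ι ι R) :
    MvPolynomial.eval (fun ij => A ij.1 ij.2) (MvPolynomial.aeval
        ![(mvPolynomialX ι ι R).trace, (mvPolynomialX ι ι R).adjugate.trace] q) =
      MvPolynomial.eval ![A.trace, A.adjugate.trace] q := by
  rw [MvPolynomial.eval_aeval]
  congr 2 with i
  fin_cases i
  · conv_rhs => rw [← mvPolynomialX_mapMatrix_eval A]
    exact AddMonoidHom.map_trace _ _
  · conv_rhs => rw [← mvPolynomialX_mapMatrix_eval A, ← RingHom.map_adjugate]
    exact AddMonoidHom.map_trace _ _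

section CubicCompanion

variable {R : Type*} [CommRing R]

/-- The companion matrix of `t³ - a t² + b t - 1`. -/
def cubicCompanion (a b : R) : Matrix (Fin 3) (Fin 3) R := !![0, 0, 1; 1, 0, -b; 0, 1, a]

lemma det_cubicCompanion (a b : R) : (cubicCompanion a b).det = 1 := by
  simp [cubicCompanion, det_fin_three]

lemma trace_cubicCompanion (a b : R) : (cubicCompanion a b).trace = a := by
  simp [cubicCompanion, trace_fin_three]

lemma trace_adjugate_cubicCompanion (a b : R) : (cubicCompanion a b).adjugate.trace = b := by
  simp [cubicCompanion, adjugate_fin_three_of, trace_fin_three]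

def cubicCompanionSL (a b : R) : SpecialLinearGroup (Fin 3) R :=
  ⟨cubicCompanion a b, det_cubicCompanion a b⟩

@[simp]
lemma coe_cubicCompanionSL (a b : R) :
    (cubicCompanionSL a b : Matrix (Fin 3) (Fin 3) R) = cubicCompanion a b :=
  rfl

noncomputable def cubicCompanionRestrict (p : MvPolynomial (Fin 3 × Fin 3) R) : MvPolynomial (Fin 2) R :=
  MvPolynomial.aeval (fun ij => cubicCompanion (MvPolynomial.X 0) (MvPolynomial.X 1) ij.1 ij.2) p

lemma eval_cubicCompanionRestrict (p : MvPolynomial (Fin 3 × Fin 3) R) (a b : R) :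
    MvPolynomial.eval ![a, b] (cubicCompanionRestrict p) =
      MvPolynomial.eval (fun ij => cubicCompanion a b ij.1 ij.2) p := by
  rw [cubicCompanionRestrict, MvPolynomial.eval_aeval]
  congr 2 with ⟨i, j⟩
  fin_cases i <;> fin_cases j <;> simp [cubicCompanion]

def krylov (W : Matrix (Fin 3) (Fin 3) R) : Matrix (Fin 3) (Fin 3) R :=
  of fun i k => (W ^ (k : ℕ)) i 0

lemma krylov_cubicCompanion (a b : R) : krylov (cubicCompanion a b) = 1 := by
  ext i k
  fin_cases i <;> fin_cases k <;>
    simp [krylov, cubicCompanion, pow_succ, mul_apply, Fin.sum_univ_three]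

lemma krylov_map {S : Type*} [CommRing S] (φ : R →+* S) (W : Matrix (Fin 3) (Fin 3) R) :
    (krylov W).map φ = krylov (W.map φ) := by
  ext i k
  simp [krylov, ← RingHom.mapMatrix_apply, ← map_pow]
  rfl

lemma eval_det_krylov_mvPolynomialX (A : Matrix (Fin 3) (Fin 3) R) :
    MvPolynomial.eval (fun ij => A ij.1 ij.2) (krylov (mvPolynomialX (Fin 3) (Fin 3) R)).det =
      (krylov A).det := by
  conv_rhs => rw [← mvPolynomialX_mapMatrix_eval A, RingHom.mapMatrix_apply, ← krylov_map]
  exact RingHom.map_det _ _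

/-- Cayley–Hamilton, read on the Krylov basis. -/
theorem mul_krylov (W : Matrix (Fin 3) (Fin 3) R) (hW : W.det = 1) :
    W * krylov W = krylov W * cubicCompanion W.trace W.adjugate.trace := by
  rw [det_fin_three] at hW
  ext i k
  fin_cases i <;> fin_cases k <;>
    simp [krylov, cubicCompanion, pow_succ, mul_apply, Fin.sum_univ_three, trace_fin_three,
      adjugate_fin_three] <;>
    first | linear_combination | linear_combination hW

end CubicCompanion

lemma trc_inv (X : SL3) : trc X⁻¹ = (X : Matrix (Fin 3) (Fin 3) ℂ).adjugate.trace :=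
  congrArg trace (Matrix.SpecialLinearGroup.coe_inv X)

lemma trc_cubicCompanionSL (a b : ℂ) : trc (cubicCompanionSL a b) = a :=
  trace_cubicCompanion a b

lemma trc_inv_cubicCompanionSL (a b : ℂ) : trc (cubicCompanionSL a b)⁻¹ = b := by
  rw [trc_inv]
  exact trace_adjugate_cubicCompanion a b

theorem apply_eq_apply_cubicCompanionSL (f : SL3 → ℂ) (hf : ∀ g X : SL3, f (g * X * g⁻¹) = f X)
    (X : SL3) (hX : (krylov (X : Matrix (Fin 3) (Fin 3) ℂ)).det ≠ 0) :
    f X = f (cubicCompanionSL (trc X) (trc X⁻¹)) := by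
  rw [trc_inv]
  exact SpecialLinearGroup.apply_eq_of_mul_eq_mul f hf _ hX (mul_krylov _ X.2)

theorem eq_zero_of_eval_trc_eq_zero (p : MvPolynomial (Fin 2) ℂ)
    (h : ∀ X : SL3, MvPolynomial.eval ![trc X, trc X⁻¹] p = 0) : p = 0 :=
  MvPolynomial.funext fun x => by
    have hx : ![x 0, x 1] = x := by ext i; fin_cases i <;> rfl
    simpa [trc_cubicCompanionSL, trc_inv_cubicCompanionSL, hx] using
      h (cubicCompanionSL (x 0) (x 1))

theorem eval_trc_cubicCompanionRestrict (f : SL3 → ℂ) (p : MvPolynomial (Fin 3 × Fin 3) ℂ)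
    (hp : ∀ X : SL3,
      f X = MvPolynomial.eval (fun ij => (X : Matrix (Fin 3) (Fin 3) ℂ) ij.1 ij.2) p)
    (hf : ∀ g X : SL3, f (g * X * g⁻¹) = f X) (X : SL3) :
    f X = MvPolynomial.eval ![trc X, trc X⁻¹] (cubicCompanionRestrict p) := by
  let M := mvPolynomialX (Fin 3) (Fin 3) ℂ
  let g := MvPolynomial.aeval ![M.trace, M.adjugate.trace] (cubicCompanionRestrict p)
  have hg : ∀ X : SL3, MvPolynomial.eval (fun ij => (X : Matrix (Fin 3) (Fin 3) ℂ) ij.1 ij.2) g =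
      MvPolynomial.eval ![trc X, trc X⁻¹] (cubicCompanionRestrict p) := fun X => by
    rw [eval_aeval_trace_trace_adjugate, trc_inv, trc]
  have := SpecialLinearGroup.eval_eq_zero_of_eval_mul_eval_eq_zero (p - g) (krylov M).det
    (fun X => ?_) (cubicCompanionSL 0 0) ?_ X
  · rwa [map_sub, ← hp, hg, sub_eq_zero] at this
  · rw [eval_det_krylov_mvPolynomialX, map_sub, ← hp, hg]
    by_cases hX : (krylov (X : Matrix (Fin 3) (Fin 3) ℂ)).det = 0
    · rw [hX, mul_zero]
    · rw [apply_eq_apply_cubicCompanionSL f hf X hX, hp, coe_cubicCompanionSL,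
        ← eval_cubicCompanionRestrict, sub_self, zero_mul]
  · rw [eval_det_krylov_mvPolynomialX, coe_cubicCompanionSL, krylov_cubicCompanion, det_one]
    exact one_ne_zero

/-- Every conjugation-invariant polynomial function on `SL(3,ℂ)` is a polynomial in
`tr X` and `tr X⁻¹`; moreover the two functions `tr X` and `tr X⁻¹` are algebraically
independent over `ℂ`. -/
theorem invariant_functions_SL3_rank_one :
    (∀ f : SL3 → ℂ,
      (∃ p : MvPolynomial (Fin 3 × Fin 3) ℂ,
        ∀ X : SL3, f X = MvPolynomial.eval
          (fun ij => (X : Matrix (Fin 3) (Fin 3) ℂ) ij.1 ij.2) p) →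
      (∀ (g X : SL3), f (g * X * g⁻¹) = f X) →
      ∃ q : MvPolynomial (Fin 2) ℂ,
        ∀ X : SL3, f X = MvPolynomial.eval ![trc X, trc X⁻¹] q) ∧
    (∀ p : MvPolynomial (Fin 2) ℂ,
      (∀ X : SL3, MvPolynomial.eval ![trc X, trc X⁻¹] p = 0) → p = 0) :=
  ⟨fun f ⟨p, hp⟩ hf => ⟨cubicCompanionRestrict p, eval_trc_cubicCompanionRestrict f p hp hf⟩,
    eq_zero_of_eval_trc_eq_zero⟩
end

section
/- For all A, B ∈ SL(3,ℂ), tr(ABA⁻¹B⁻¹) + tr(BAB⁻¹A⁻¹) = P(A,B), where, writing t_1 = tr(A), t_{-1} = tr(A⁻¹), t_2 = tr(B), t_{-2} = tr(B⁻¹), t_3 = tr(AB), t_{-3} = tr(A⁻¹B⁻¹), t_4 = tr(AB⁻¹), t_{-4} = tr(A⁻¹B), one has P = t_1t_{-1}t_2t_{-2} − t_1t_2t_{-3} − t_{-1}t_{-2}t_3 − t_1t_{-2}t_{-4} − t_{-1}t_2t_4 + t_1t_{-1} + t_2t_{-2} + t_3t_{-3} + t_4t_{-4} − 3. -/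
/-- For all `A, B ∈ SL(3,ℂ)`, `tr(ABA⁻¹B⁻¹) + tr(BAB⁻¹A⁻¹) = P(A,B)`, where `P` is the
explicit polynomial of Lawton in the eight trace coordinates
`t₁ = tr A`, `t₋₁ = tr A⁻¹`, `t₂ = tr B`, `t₋₂ = tr B⁻¹`, `t₃ = tr AB`, `t₋₃ = tr A⁻¹B⁻¹`,
`t₄ = tr AB⁻¹`, `t₋₄ = tr A⁻¹B`. -/
theorem trace_comm_add_trace_comm_rev (A B : SL3)
    (t1 n1 t2 n2 t3 n3 t4 n4 : ℂ)
    (h1 : t1 = trc A) (h1' : n1 = trc A⁻¹)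
    (h2 : t2 = trc B) (h2' : n2 = trc B⁻¹)
    (h3 : t3 = trc (A * B)) (h3' : n3 = trc (A⁻¹ * B⁻¹))
    (h4 : t4 = trc (A * B⁻¹)) (h4' : n4 = trc (A⁻¹ * B)) :
    trc (A * B * A⁻¹ * B⁻¹) + trc (B * A * B⁻¹ * A⁻¹) =
      t1*n1*t2*n2 - t1*t2*n3 - n1*n2*t3 - t1*n2*n4 - n1*t2*t4
        + t1*n1 + t2*n2 + t3*n3 + t4*n4 - 3 := by
  have ha : Matrix.det (A : Matrix (Fin 3) (Fin 3) ℂ) = 1 := A.2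
  have hb : Matrix.det (B : Matrix (Fin 3) (Fin 3) ℂ) = 1 := B.2
  rw [Matrix.det_fin_three] at ha hb
  subst h1 h1' h2 h2' h3 h3' h4 h4'
  simp only [trc, Matrix.SpecialLinearGroup.coe_mul, Matrix.SpecialLinearGroup.coe_inv,
    Matrix.adjugate_fin_three, Matrix.trace_fin_three, Matrix.mul_apply, Fin.sum_univ_three,
    Matrix.cons_val', Matrix.cons_val_zero, Matrix.cons_val_one, Matrix.head_cons,
    Matrix.head_fin_const, Matrix.cons_val_two, Matrix.tail_cons, Matrix.empty_val',
    Matrix.cons_val_fin_one, Matrix.of_apply]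
  linear_combination (((B : Matrix (Fin 3) (Fin 3) ℂ) 0 0 + (B : Matrix (Fin 3) (Fin 3) ℂ) 1 1 + (B : Matrix (Fin 3) (Fin 3) ℂ) 2 2) * (((B : Matrix (Fin 3) (Fin 3) ℂ) 1 1 * (B : Matrix (Fin 3) (Fin 3) ℂ) 2 2 - (B : Matrix (Fin 3) (Fin 3) ℂ) 1 2 * (B : Matrix (Fin 3) (Fin 3) ℂ) 2 1) + ((B : Matrix (Fin 3) (Fin 3) ℂ) 0 0 * (B : Matrix (Fin 3) (Fin 3) ℂ) 2 2 - (B : Matrix (Fin 3) (Fin 3) ℂ) 0 2 * (B : Matrix (Fin 3) (Fin 3) ℂ) 2 0) + ((B : Matrix (Fin 3) (Fin 3) ℂ) 0 0 * (B : Matrix (Fin 3) (Fin 3) ℂ) 1 1 - (B : Matrix (Fin 3) (Fin 3) ℂ) 0 1 * (B : Matrix (Fin 3) (Fin 3) ℂ) 1 0)) - 3) * ha +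
    (((A : Matrix (Fin 3) (Fin 3) ℂ) 0 0 + (A : Matrix (Fin 3) (Fin 3) ℂ) 1 1 + (A : Matrix (Fin 3) (Fin 3) ℂ) 2 2) * (((A : Matrix (Fin 3) (Fin 3) ℂ) 1 1 * (A : Matrix (Fin 3) (Fin 3) ℂ) 2 2 - (A : Matrix (Fin 3) (Fin 3) ℂ) 1 2 * (A : Matrix (Fin 3) (Fin 3) ℂ) 2 1) + ((A : Matrix (Fin 3) (Fin 3) ℂ) 0 0 * (A : Matrix (Fin 3) (Fin 3) ℂ) 2 2 - (A : Matrix (Fin 3) (Fin 3) ℂ) 0 2 * (A : Matrix (Fin 3) (Fin 3) ℂ) 2 0) + ((A : Matrix (Fin 3) (Fin 3) ℂ) 0 0 * (A : Matrix (Fin 3) (Fin 3) ℂ) 1 1 - (A : Matrix (Fin 3) (Fin 3) ℂ) 0 1 * (A : Matrix (Fin 3) (Fin 3) ℂ) 1 0)) - 3 * ((A : Matrix (Fin 3) (Fin 3) ℂ) 0 0 * ((A : Matrix (Fin 3) (Fin 3) ℂ) 1 1 * (A : Matrix (Fin 3) (Fin 3) ℂ) 2 2 - (A : Matrix (Fin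 3) (Fin 3) ℂ) 1 2 * (A : Matrix (Fin 3) (Fin 3) ℂ) 2 1) - (A : Matrix (Fin 3) (Fin 3) ℂ) 0 1 * ((A : Matrix (Fin 3) (Fin 3) ℂ) 1 0 * (A : Matrix (Fin 3) (Fin 3) ℂ) 2 2 - (A : Matrix (Fin 3) (Fin 3) ℂ) 1 2 * (A : Matrix (Fin 3) (Fin 3) ℂ) 2 0) + (A : Matrix (Fin 3) (Fin 3) ℂ) 0 2 * ((A : Matrix (Fin 3) (Fin 3) ℂ) 1 0 * (A : Matrix (Fin 3) (Fin 3) ℂ) 2 1 - (A : Matrix (Fin 3) (Fin 3) ℂ) 1 1 * (A : Matrix (Fin 3) (Fin 3) ℂ) 2 0))) * hb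
end

section
/- For all A, B ∈ SL(3,ℂ), tr(ABAB⁻¹) = tr(AB)·tr(AB⁻¹) + tr(A⁻¹) + tr(A⁻¹B)·tr(B⁻¹) + tr(B)·tr(A⁻¹B⁻¹) − tr(A⁻¹)·tr(B)·tr(B⁻¹). (This identity underlies the Poisson bracket computation {tr(AB), tr(AB⁻¹)} on the SL(3,ℂ)-character variety of the one-holed torus.) -/
/-- For all `A, B ∈ SL(3,ℂ)`,
`tr(ABAB⁻¹) = tr(AB)·tr(AB⁻¹) + tr(A⁻¹) + tr(A⁻¹B)·tr(B⁻¹) + tr(B)·tr(A⁻¹B⁻¹)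
  − tr(A⁻¹)·tr(B)·tr(B⁻¹)`. -/
theorem trace_ABABinv (A B : SL3) :
    trc (A * B * A * B⁻¹) =
      trc (A * B) * trc (A * B⁻¹) + trc A⁻¹ + trc (A⁻¹ * B) * trc B⁻¹
        + trc B * trc (A⁻¹ * B⁻¹) - trc A⁻¹ * trc B * trc B⁻¹ := by
  have hb : Matrix.det (B : Matrix (Fin 3) (Fin 3) ℂ) = 1 := B.prop
  set MA : Matrix (Fin 3) (Fin 3) ℂ := (A : Matrix (Fin 3) (Fin 3) ℂ) with hMA
  set MB : Matrix (Fin 3) (Fin 3) ℂ := (B : Matrix (Fin 3) (Fin 3) ℂ) with hMB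
  rw [Matrix.det_fin_three] at hb
  simp only [trc, Matrix.SpecialLinearGroup.coe_mul, Matrix.SpecialLinearGroup.coe_inv,
    ← hMA, ← hMB, Matrix.adjugate_fin_three, Matrix.trace_fin_three, Matrix.mul_apply,
    Fin.sum_univ_three, Matrix.cons_val', Matrix.cons_val_zero, Matrix.cons_val_one,
    Matrix.head_cons, Matrix.empty_val', Matrix.cons_val_fin_one, Matrix.cons_val_two,
    Matrix.tail_cons, Matrix.of_apply, Matrix.head_fin_const]
  linear_combination ((-1) * MA 1 2 * MA 2 1 + MA 1 1 * MA 2 2 + (-1) * MA 0 2 * MA 2 0 + (-1) * MA 0 1 * MA 1 0 + MA 0 0 * MA 2 2 + MA 0 0 * MA 1 1) * hb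
end
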